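/- Let π be a policy with π(a) > 0 for every a ∈ A, let μ be an environment, and for σ ∈ S set w(σ) = ∏_{a∈A(σ)} π(a) and for a ∈ A set P(a) = Σ_{σ∈S : a∈A(σ)} w(σ). Then Σ_{σ∈S} β(z̃(σ,μ))·w(σ)/P(z̃(σ,μ)) = |A|. -/
import Mathlib


open scoped Classical

/-- A finite rooted tree whose internal nodes are partitioned into infosets `N`
and actions `A`: the root is an infoset, every child of an infoset is an action,
every child of an action is an infoset or a leaf, and every infoset has at
least two children.  The tree structure is given by a parent function together
with a depth function witnessing well-foundedness. -/
structure EFTree (V : Type*) [Fintype V] [DecidableEq V] where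
  root : V
  parent : V → V
  parent_root : parent root = root
  depth : V → ℕ
  depth_root : depth root = 0
  depth_parent : ∀ v : V, v ≠ root → depth v = depth (parent v) + 1
  N : Finset V
  A : Finset V
  disj : Disjoint N A
  internal_iff : ∀ v : V, (v ∈ N ∨ v ∈ A) ↔ ∃ u : V, u ≠ root ∧ parent u = v
  root_N : root ∈ N
  infoset_child : ∀ u : V, u ≠ root → parent u ∈ N → u ∈ A
  action_child : ∀ u : V, u ≠ root → parent u ∈ A → u ∉ A
  branching : ∀ v ∈ N, 1 < (Finset.univ.filter fun u => u ≠ root ∧ parent u = v).card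

namespace EFTree

variable {V : Type*} [Fintype V] [DecidableEq V] (T : EFTree V)

/-- The set `C(v)` of children of a node `v`. -/
def children (v : V) : Finset V := Finset.univ.filter fun u => u ≠ T.root ∧ T.parent u = v

/-- The set `L` of leaves: the nodes that are neither infosets nor actions. -/
def leaves : Finset V := Finset.univ \ (T.N ∪ T.A)

/-- `Desc u v` means `u` is a descendant of `v` (every node is a descendant of itself). -/
def Desc (u v : V) : Prop := ∃ k : ℕ, T.parent^[k] u = v

/-- The reachable set `V(σ)` of a (sub-)strategy `σ` started at the node `w`:
the minimal set of nodes containing `w`, containing `σ v` for every infoset `v`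
in the set, and containing all children of every action in the set. -/
def reachFrom (w : V) (σ : V → V) : Set V :=
  ⋂₀ {s : Set V | w ∈ s ∧ (∀ v ∈ T.N, v ∈ s → σ v ∈ s) ∧
      ∀ a ∈ T.A, a ∈ s → ∀ u ∈ T.children a, u ∈ s}

/-- The reachable set `V(σ)` of a strategy `σ`. -/
def reachS (σ : V → V) : Set V := T.reachFrom T.root σ

/-- `σ : V → V` canonically represents a reduced sub-strategy at the node `w`:
at every infoset in its reachable set it selects a child, and everywhere else it
is the identity (so that each reduced sub-strategy, i.e. each restriction of a
sub-strategy at `w` to the infosets it can reach, has exactly one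
representative). -/
def IsRedSubStrat (w : V) (σ : V → V) : Prop :=
  (∀ v ∈ T.N, v ∈ T.reachFrom w σ → σ v ∈ T.children v) ∧
  ∀ v : V, ¬(v ∈ T.N ∧ v ∈ T.reachFrom w σ) → σ v = v

/-- `σ : V → V` canonically represents a reduced strategy, i.e. a member of `S`. -/
def IsRedStrat (σ : V → V) : Prop := T.IsRedSubStrat T.root σ

/-- The set `A(σ) = A ∩ V(σ)` of actions reachable under a reduced (sub-)strategy. -/
noncomputable def Aset (σ : V → V) : Finset V := T.A.filter fun a => a ∈ T.reachS σ

/-- The set `A(σ) = A ∩ V(σ)` for a reduced sub-strategy at `w`. -/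
noncomputable def AsetFrom (w : V) (σ : V → V) : Finset V := T.A.filter fun a => a ∈ T.reachFrom w σ

/-- An environment chooses a child of every action. -/
def IsEnv (μ : V → V) : Prop := ∀ a ∈ T.A, μ a ∈ T.children a

/-- The reachable set `V(μ)` of an environment `μ`: the minimal set of nodes
containing the root, all children of every infoset in the set, and `μ a` for
every action `a` in the set. -/
def reachE (μ : V → V) : Set V :=
  ⋂₀ {s : Set V | T.root ∈ s ∧ (∀ v ∈ T.N, v ∈ s → ∀ u ∈ T.children v, u ∈ s) ∧
      ∀ a ∈ T.A, a ∈ s → μ a ∈ s}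

/-- `Z(μ)`: the set of actions reachable under `μ` whose chosen child is a leaf. -/
noncomputable def Zset (μ : V → V) : Finset V := T.A.filter fun a => a ∈ T.reachE μ ∧ μ a ∈ T.leaves

/-- A policy assigns to each action a probability in `[0,1]`, summing to one
over the children of each infoset. -/
def IsPolicy (π : V → ℝ) : Prop :=
  (∀ a ∈ T.A, 0 ≤ π a ∧ π a ≤ 1) ∧ ∀ v ∈ T.N, ∑ a ∈ T.children v, π a = 1

/-- The root-to-leaf path traversed when the reduced strategy `σ` is played
against the environment `μ`: the minimal set of nodes containing the root,
containing `σ v` for every infoset `v` in the set, and `μ a` for every action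
`a` in the set. -/
def playPath (σ μ : V → V) : Set V :=
  ⋂₀ {s : Set V | T.root ∈ s ∧ (∀ v ∈ T.N, v ∈ s → σ v ∈ s) ∧
      ∀ a ∈ T.A, a ∈ s → μ a ∈ s}

/-- `z` is the last action node on the play path of `(σ, μ)`: it is an action on
the path of which every other action on the path is an ancestor. -/
def IsLastAction (σ μ : V → V) (z : V) : Prop :=
  z ∈ T.A ∧ z ∈ T.playPath σ μ ∧ ∀ a ∈ T.A, a ∈ T.playPath σ μ → T.Desc z a

section Aux
variable {V : Type*} [Fintype V] [DecidableEq V] (T : EFTree V)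

lemma depth_eq_zero_iff {v : V} : T.depth v = 0 ↔ v = T.root := by
  constructor
  · intro h; by_contra hv
    have := T.depth_parent v hv; omega
  · rintro rfl; exact T.depth_root

lemma mem_children {u v : V} : u ∈ T.children v ↔ u ≠ T.root ∧ T.parent u = v := by
  simp [children]

lemma depth_iterate_of_le {v : V} {k : ℕ} (h : k ≤ T.depth v) :
    T.depth (T.parent^[k] v) = T.depth v - k := by
  induction k with
  | zero => simp
  | succ n ih =>
    have hn : n ≤ T.depth v := le_of_lt (Nat.lt_of_succ_le h)
    have h1 : T.depth (T.parent^[n] v) = T.depth v - n := ih hn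
    have hne : T.parent^[n] v ≠ T.root := by
      intro hr
      rw [hr, T.depth_root] at h1; omega
    have := T.depth_parent _ hne
    rw [Function.iterate_succ_apply', ← Function.comp_apply (f := T.parent)] at *
    simp only [Function.comp_apply] at *
    omega

lemma parent_iterate_depth {v : V} : T.parent^[T.depth v] v = T.root := by
  have := T.depth_iterate_of_le (v := v) (k := T.depth v) le_rfl
  exact (T.depth_eq_zero_iff).1 (by omega)

lemma parent_iterate_ge {v : V} {k : ℕ} (h : T.depth v ≤ k) :
    T.parent^[k] v = T.root := by
  obtain ⟨j, rfl⟩ := Nat.exists_eq_add_of_le h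
  rw [Nat.add_comm, Function.iterate_add_apply, T.parent_iterate_depth]
  induction j with
  | zero => rfl
  | succ n ih => rw [Function.iterate_succ_apply', ih (by omega), T.parent_root]

lemma desc_root (v : V) : T.Desc v T.root := ⟨T.depth v, T.parent_iterate_depth⟩

lemma desc_normalize {u v : V} (h : T.Desc u v) :
    T.depth v ≤ T.depth u ∧ T.parent^[T.depth u - T.depth v] u = v := by
  obtain ⟨k, hk⟩ := h
  by_cases hle : k ≤ T.depth u
  · have := T.depth_iterate_of_le hle
    rw [hk] at this
    constructor
    · omega
    · have : T.depth u - T.depth v = k := by omega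
      rw [this, hk]
  · have hr : T.parent^[k] u = T.root := T.parent_iterate_ge (by omega)
    rw [hk] at hr; subst hr
    rw [T.depth_root]
    exact ⟨Nat.zero_le _, by simpa using T.parent_iterate_ge (by omega)⟩

lemma desc_antisymm {u v : V} (h1 : T.Desc u v) (h2 : T.Desc v u) : u = v := by
  have n1 := T.desc_normalize h1
  have n2 := T.desc_normalize h2
  have : T.depth u = T.depth v := le_antisymm n2.1 n1.1
  have := n1.2
  rw [this.symm] at *
  simpa [show T.depth u - T.depth v = 0 by omega] using n1.2

lemma desc_parent_iterate (v : V) (k : ℕ) : T.Desc v (T.parent^[k] v) := ⟨k, rfl⟩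

lemma notA_of_N {v : V} (h : v ∈ T.N) : v ∉ T.A :=
  Finset.disjoint_left.mp T.disj h

lemma depth_pos_of_A {a : V} (ha : a ∈ T.A) : a ≠ T.root := by
  intro h; subst h; exact T.notA_of_N T.root_N ha

lemma internal_of_child {u : V} (h : u ≠ T.root) : T.parent u ∈ T.N ∨ T.parent u ∈ T.A :=
  (T.internal_iff (T.parent u)).2 ⟨u, h, rfl⟩

lemma children_nonempty {v : V} (hv : v ∈ T.N) : (T.children v).Nonempty := by
  have := T.branching v hv
  rw [show (Finset.univ.filter fun u => u ≠ T.root ∧ T.parent u = v) = T.children v from rfl] at this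
  exact Finset.card_pos.mp (by omega)

lemma child_of_N_mem_A {u v : V} (hv : v ∈ T.N) (hu : u ∈ T.children v) : u ∈ T.A := by
  rw [mem_children] at hu
  exact T.infoset_child u hu.1 (hu.2 ▸ hv)

lemma child_of_A_not_A {u a : V} (ha : a ∈ T.A) (hu : u ∈ T.children a) : u ∉ T.A := by
  rw [mem_children] at hu
  exact T.action_child u hu.1 (hu.2 ▸ ha)

lemma depth_lt_card (v : V) : T.depth v < Fintype.card V := by
  have hinj : Function.Injective (fun k : Fin (T.depth v + 1) => T.parent^[(k : ℕ)] v) := by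
    intro i j hij
    simp only at hij
    have di := T.depth_iterate_of_le (v := v) (k := i) (by omega)
    have dj := T.depth_iterate_of_le (v := v) (k := j) (by omega)
    rw [hij] at di
    have : (i : ℕ) = j := by omega
    exact Fin.ext this
  have := Fintype.card_le_of_injective _ hinj
  simpa using this

end Aux
section Aux2
variable {V : Type*} [Fintype V] [DecidableEq V] (T : EFTree V)

/-! ### Closure and minimality for `reachFrom` -/

lemma reachFrom_subset {w : V} {σ : V → V} {s : Set V}
    (h1 : w ∈ s) (h2 : ∀ v ∈ T.N, v ∈ s → σ v ∈ s)
    (h3 : ∀ a ∈ T.A, a ∈ s → ∀ u ∈ T.children a, u ∈ s) :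
    T.reachFrom w σ ⊆ s :=
  Set.sInter_subset_of_mem ⟨h1, h2, h3⟩

lemma reachFrom_self (w : V) (σ : V → V) : w ∈ T.reachFrom w σ := by
  intro s hs; exact hs.1

lemma reachFrom_strat {w : V} {σ : V → V} {v : V} (hv : v ∈ T.N)
    (h : v ∈ T.reachFrom w σ) : σ v ∈ T.reachFrom w σ := by
  intro s hs; exact hs.2.1 v hv (h s hs)

lemma reachFrom_children {w : V} {σ : V → V} {a u : V} (ha : a ∈ T.A)
    (h : a ∈ T.reachFrom w σ) (hu : u ∈ T.children a) : u ∈ T.reachFrom w σ := by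
  intro s hs; exact hs.2.2 a ha (h s hs) u hu

/-! ### Closure and minimality for `reachE` -/

lemma reachE_subset {μ : V → V} {s : Set V}
    (h1 : T.root ∈ s) (h2 : ∀ v ∈ T.N, v ∈ s → ∀ u ∈ T.children v, u ∈ s)
    (h3 : ∀ a ∈ T.A, a ∈ s → μ a ∈ s) :
    T.reachE μ ⊆ s :=
  Set.sInter_subset_of_mem ⟨h1, h2, h3⟩

lemma reachE_root (μ : V → V) : T.root ∈ T.reachE μ := by
  intro s hs; exact hs.1

lemma reachE_children {μ : V → V} {v u : V} (hv : v ∈ T.N)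
    (h : v ∈ T.reachE μ) (hu : u ∈ T.children v) : u ∈ T.reachE μ := by
  intro s hs; exact hs.2.1 v hv (h s hs) u hu

lemma reachE_env {μ : V → V} {a : V} (ha : a ∈ T.A)
    (h : a ∈ T.reachE μ) : μ a ∈ T.reachE μ := by
  intro s hs; exact hs.2.2 a ha (h s hs)

/-! ### Closure and minimality for `playPath` -/

lemma playPath_subset {σ μ : V → V} {s : Set V}
    (h1 : T.root ∈ s) (h2 : ∀ v ∈ T.N, v ∈ s → σ v ∈ s)
    (h3 : ∀ a ∈ T.A, a ∈ s → μ a ∈ s) :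
    T.playPath σ μ ⊆ s :=
  Set.sInter_subset_of_mem ⟨h1, h2, h3⟩

lemma playPath_root (σ μ : V → V) : T.root ∈ T.playPath σ μ := by
  intro s hs; exact hs.1

lemma playPath_strat {σ μ : V → V} {v : V} (hv : v ∈ T.N)
    (h : v ∈ T.playPath σ μ) : σ v ∈ T.playPath σ μ := by
  intro s hs; exact hs.2.1 v hv (h s hs)

lemma playPath_env {σ μ : V → V} {a : V} (ha : a ∈ T.A)
    (h : a ∈ T.playPath σ μ) : μ a ∈ T.playPath σ μ := by
  intro s hs; exact hs.2.2 a ha (h s hs)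

/-! ### Ancestor lemmas -/

lemma reachE_ancestor {μ : V → V} (hμ : T.IsEnv μ) {v : V} (h : v ∈ T.reachE μ)
    (hv : v ≠ T.root) :
    T.parent v ∈ T.reachE μ ∧ (T.parent v ∈ T.A → μ (T.parent v) = v) := by
  have hsub : T.reachE μ ⊆ {u | u ∈ T.reachE μ ∧ (u = T.root ∨
      (T.parent u ∈ T.reachE μ ∧ (T.parent u ∈ T.A → μ (T.parent u) = u)))} := by
    apply T.reachE_subset
    · exact ⟨T.reachE_root μ, Or.inl rfl⟩
    · intro w hw hws u hu
      refine ⟨T.reachE_children hw hws.1 hu, Or.inr ?_⟩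
      have hp : T.parent u = w := ((T.mem_children).1 hu).2
      rw [hp]
      exact ⟨hws.1, fun hA => absurd hA (T.notA_of_N hw)⟩
    · intro a ha has
      have hma : μ a ∈ T.children a := hμ a ha
      refine ⟨T.reachE_env ha has.1, Or.inr ?_⟩
      have hp : T.parent (μ a) = a := ((T.mem_children).1 hma).2
      rw [hp]
      exact ⟨has.1, fun _ => rfl⟩
  have := hsub h
  rcases this.2 with h1 | h2
  · exact absurd h1 hv
  · exact h2

lemma reachE_ancestor_iterate {μ : V → V} (hμ : T.IsEnv μ) {v : V} (h : v ∈ T.reachE μ)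
    (k : ℕ) : T.parent^[k] v ∈ T.reachE μ := by
  induction k with
  | zero => exact h
  | succ n ih =>
    rw [Function.iterate_succ_apply']
    by_cases hr : T.parent^[n] v = T.root
    · rw [hr, T.parent_root]; exact T.reachE_root μ
    · exact (T.reachE_ancestor hμ ih hr).1

lemma reachS_ancestor {σ : V → V} (hσ : T.IsRedStrat σ) {v : V} (h : v ∈ T.reachS σ)
    (hv : v ≠ T.root) :
    T.parent v ∈ T.reachS σ ∧ (T.parent v ∈ T.N → σ (T.parent v) = v) := by
  have hsub : T.reachS σ ⊆ {u | u ∈ T.reachS σ ∧ (u = T.root ∨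
      (T.parent u ∈ T.reachS σ ∧ (T.parent u ∈ T.N → σ (T.parent u) = u)))} := by
    apply T.reachFrom_subset
    · exact ⟨T.reachFrom_self _ _, Or.inl rfl⟩
    · intro w hw hws
      have hc : σ w ∈ T.children w := hσ.1 w hw hws.1
      refine ⟨T.reachFrom_strat hw hws.1, Or.inr ?_⟩
      have hp : T.parent (σ w) = w := ((T.mem_children).1 hc).2
      rw [hp]
      exact ⟨hws.1, fun _ => rfl⟩
    · intro a ha has u hu
      refine ⟨T.reachFrom_children ha has.1 hu, Or.inr ?_⟩
      have hp : T.parent u = a := ((T.mem_children).1 hu).2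
      rw [hp]
      exact ⟨has.1, fun hN => absurd ha (T.notA_of_N hN)⟩
  have := hsub h
  rcases this.2 with h1 | h2
  · exact absurd h1 hv
  · exact h2

lemma playPath_ancestor {σ μ : V → V} (hσ : T.IsRedStrat σ) (hμ : T.IsEnv μ) {v : V}
    (h : v ∈ T.playPath σ μ) (hv : v ≠ T.root) :
    T.parent v ∈ T.playPath σ μ ∧ (T.parent v ∈ T.N → σ (T.parent v) = v) ∧
      (T.parent v ∈ T.A → μ (T.parent v) = v) := by
  have hPS : T.playPath σ μ ⊆ T.reachS σ := by
    apply T.playPath_subset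
    · exact T.reachFrom_self _ _
    · intro w hw hws; exact T.reachFrom_strat hw hws
    · intro a ha has; exact T.reachFrom_children ha has (hμ a ha)
  have hsub : T.playPath σ μ ⊆ {u | u ∈ T.playPath σ μ ∧ (u = T.root ∨
      (T.parent u ∈ T.playPath σ μ ∧ (T.parent u ∈ T.N → σ (T.parent u) = u) ∧
        (T.parent u ∈ T.A → μ (T.parent u) = u)))} := by
    apply T.playPath_subset
    · exact ⟨T.playPath_root _ _, Or.inl rfl⟩
    · intro w hw hws
      have hc : σ w ∈ T.children w := hσ.1 w hw (hPS hws.1)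
      refine ⟨T.playPath_strat hw hws.1, Or.inr ?_⟩
      have hp : T.parent (σ w) = w := ((T.mem_children).1 hc).2
      rw [hp]
      exact ⟨hws.1, fun _ => rfl, fun hA => absurd hA (T.notA_of_N hw)⟩
    · intro a ha has
      have hc : μ a ∈ T.children a := hμ a ha
      refine ⟨T.playPath_env ha has.1, Or.inr ?_⟩
      have hp : T.parent (μ a) = a := ((T.mem_children).1 hc).2
      rw [hp]
      exact ⟨has.1, fun hN => absurd ha (T.notA_of_N hN), fun _ => rfl⟩
  have := hsub h
  rcases this.2 with h1 | h2
  · exact absurd h1 hv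
  · exact h2

lemma playPath_subset_reachS {σ μ : V → V} (hμ : T.IsEnv μ) :
    T.playPath σ μ ⊆ T.reachS σ := by
  apply T.playPath_subset
  · exact T.reachFrom_self _ _
  · intro w hw hws; exact T.reachFrom_strat hw hws
  · intro a ha has; exact T.reachFrom_children ha has (hμ a ha)

lemma playPath_subset_reachE {σ μ : V → V} (hσ : T.IsRedStrat σ) (hμ : T.IsEnv μ) :
    T.playPath σ μ ⊆ T.reachE μ := by
  have h : T.playPath σ μ ⊆ T.reachE μ ∩ T.reachS σ := by
    apply T.playPath_subset
    · exact ⟨T.reachE_root μ, T.reachFrom_self _ _⟩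
    · intro w hw hws
      exact ⟨T.reachE_children hw hws.1 (hσ.1 w hw hws.2), T.reachFrom_strat hw hws.2⟩
    · intro a ha has
      exact ⟨T.reachE_env ha has.1, T.reachFrom_children ha has.2 (hμ a ha)⟩
  exact h.trans Set.inter_subset_left
end Aux2
section Aux3
variable {V : Type*} [Fintype V] [DecidableEq V] (T : EFTree V)

lemma mem_leaves_iff {v : V} : v ∈ T.leaves ↔ v ∉ T.N ∧ v ∉ T.A := by
  simp [leaves, Finset.mem_sdiff]

lemma playPath_ancestor_iterate {σ μ : V → V} (hσ : T.IsRedStrat σ) (hμ : T.IsEnv μ)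
    {v : V} (h : v ∈ T.playPath σ μ) (k : ℕ) : T.parent^[k] v ∈ T.playPath σ μ := by
  induction k with
  | zero => exact h
  | succ n ih =>
    rw [Function.iterate_succ_apply']
    by_cases hr : T.parent^[n] v = T.root
    · rw [hr, T.parent_root]; exact T.playPath_root _ _
    · exact (T.playPath_ancestor hσ hμ ih hr).1

/-- If `z` is reachable both under strategy `σ` and under environment `μ`, it is
on the play path. -/
lemma mem_playPath_of_reach {σ μ : V → V} (hσ : T.IsRedStrat σ) (hμ : T.IsEnv μ) :
    ∀ n : ℕ, ∀ z : V, T.depth z ≤ n → z ∈ T.reachS σ → z ∈ T.reachE μ →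
      z ∈ T.playPath σ μ := by
  intro n
  induction n with
  | zero =>
    intro z hd _ _
    have : z = T.root := (T.depth_eq_zero_iff).1 (by omega)
    rw [this]; exact T.playPath_root _ _
  | succ n ih =>
    intro z hd hzS hzE
    by_cases hr : z = T.root
    · rw [hr]; exact T.playPath_root _ _
    · have hdp : T.depth z = T.depth (T.parent z) + 1 := T.depth_parent z hr
      have hpS := T.reachS_ancestor hσ hzS hr
      have hpE := T.reachE_ancestor hμ hzE hr
      have hpP : T.parent z ∈ T.playPath σ μ := ih _ (by omega) hpS.1 hpE.1
      rcases T.internal_of_child hr with hN | hA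
      · rw [← hpS.2 hN]; exact T.playPath_strat hN hpP
      · rw [← hpE.2 hA]; exact T.playPath_env hA hpP

/-- Everything on the play path is an ancestor of a last action `z`, or the
leaf `μ z`. -/
lemma playPath_desc {σ μ : V → V} (hσ : T.IsRedStrat σ) (hμ : T.IsEnv μ) {z : V}
    (hzA : z ∈ T.A) (hzP : z ∈ T.playPath σ μ) (hzL : μ z ∈ T.leaves) :
    ∀ a ∈ T.A, a ∈ T.playPath σ μ → T.Desc z a := by
  have hanc : ∀ k : ℕ, T.parent^[k] z ∈ T.playPath σ μ :=
    T.playPath_ancestor_iterate hσ hμ hzP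
  have hμzA : μ z ∉ T.A := ((T.mem_leaves_iff).1 hzL).2
  have hsub : T.playPath σ μ ⊆ {v | T.Desc z v ∨ v = μ z} := by
    apply T.playPath_subset
    · exact Or.inl (T.desc_root z)
    · rintro w hw (hd | rfl)
      · obtain ⟨hle, hk⟩ := T.desc_normalize hd
        have hk0 : T.depth z - T.depth w ≠ 0 := by
          intro h0
          rw [h0] at hk
          simp at hk
          rw [← hk] at hw
          exact T.notA_of_N hw hzA
        obtain ⟨j, hj⟩ : ∃ j, T.depth z - T.depth w = j + 1 :=
          ⟨_, (Nat.succ_pred_eq_of_pos (Nat.pos_of_ne_zero hk0)).symm⟩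
        rw [hj] at hk
        have hune : T.parent^[j] z ≠ T.root := by
          intro h0
          have hdu := T.depth_iterate_of_le (v := z) (k := j) (by omega)
          rw [h0, T.depth_root] at hdu
          omega
        have hpar : T.parent (T.parent^[j] z) = w := by
          rw [← Function.iterate_succ_apply' T.parent j z]; exact hk
        have hstep := (T.playPath_ancestor hσ hμ (hanc j) hune).2.1
        rw [hpar] at hstep
        rw [hstep hw]
        exact Or.inl (T.desc_parent_iterate z j)
      · exact absurd hw ((T.mem_leaves_iff).1 hzL).1
    · rintro a ha (hd | rfl)
      · obtain ⟨hle, hk⟩ := T.desc_normalize hd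
        by_cases hk0 : T.depth z - T.depth a = 0
        · rw [hk0] at hk
          simp at hk
          rw [← hk]
          exact Or.inr rfl
        · obtain ⟨j, hj⟩ : ∃ j, T.depth z - T.depth a = j + 1 :=
            ⟨_, (Nat.succ_pred_eq_of_pos (Nat.pos_of_ne_zero hk0)).symm⟩
          rw [hj] at hk
          have hune : T.parent^[j] z ≠ T.root := by
            intro h0
            have hdu := T.depth_iterate_of_le (v := z) (k := j) (by omega)
            rw [h0, T.depth_root] at hdu
            have hda : T.depth a ≠ 0 := by
              intro h1
              exact T.depth_pos_of_A ha ((T.depth_eq_zero_iff).1 h1)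
            omega
          have hpar : T.parent (T.parent^[j] z) = a := by
            rw [← Function.iterate_succ_apply' T.parent j z]; exact hk
          have hstep := (T.playPath_ancestor hσ hμ (hanc j) hune).2.2
          rw [hpar] at hstep
          rw [hstep ha]
          exact Or.inl (T.desc_parent_iterate z j)
      · exact absurd ha hμzA
  intro a haA haP
  rcases hsub haP with hd | heq
  · exact hd
  · exact absurd (heq ▸ haA) hμzA

/-- The chosen child of a last action is a leaf. -/
lemma lastAction_leaf {σ μ : V → V} (hσ : T.IsRedStrat σ) (hμ : T.IsEnv μ) {z : V}
    (h : T.IsLastAction σ μ z) : μ z ∈ T.leaves := by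
  obtain ⟨hzA, hzP, hlast⟩ := h
  by_contra hL
  have hμz : μ z ∈ T.playPath σ μ := T.playPath_env hzA hzP
  have hμzc : μ z ∈ T.children z := hμ z hzA
  have hμznA : μ z ∉ T.A := T.child_of_A_not_A hzA hμzc
  have hμzN : μ z ∈ T.N := by
    by_contra hN
    exact hL ((T.mem_leaves_iff).2 ⟨hN, hμznA⟩)
  have hσμ : σ (μ z) ∈ T.playPath σ μ := T.playPath_strat hμzN hμz
  have hμzS : μ z ∈ T.reachS σ := T.playPath_subset_reachS hμ hμz
  have hσc : σ (μ z) ∈ T.children (μ z) := hσ.1 _ hμzN hμzS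
  have hσA : σ (μ z) ∈ T.A := T.child_of_N_mem_A hμzN hσc
  have hdesc : T.Desc z (σ (μ z)) := hlast _ hσA hσμ
  have h1 : T.depth (μ z) = T.depth z + 1 := by
    have := (T.mem_children).1 hμzc
    rw [T.depth_parent _ this.1, this.2]
  have h2 : T.depth (σ (μ z)) = T.depth (μ z) + 1 := by
    have := (T.mem_children).1 hσc
    rw [T.depth_parent _ this.1, this.2]
  have := (T.desc_normalize hdesc).1
  omega

lemma lastAction_mem_Zset {σ μ : V → V} (hσ : T.IsRedStrat σ) (hμ : T.IsEnv μ) {z : V}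
    (h : T.IsLastAction σ μ z) : z ∈ T.Zset μ := by
  rw [Zset, Finset.mem_filter]
  exact ⟨h.1, T.playPath_subset_reachE hσ hμ h.2.1, T.lastAction_leaf hσ hμ h⟩

lemma lastAction_unique {σ μ : V → V} {z z' : V}
    (h : T.IsLastAction σ μ z) (h' : T.IsLastAction σ μ z') : z = z' :=
  T.desc_antisymm (h.2.2 z' h'.1 h'.2.1) (h'.2.2 z h.1 h.2.1)

/-- Key equivalence: for a reduced strategy `τ` and `z ∈ Z(μ)`,
`z` is the last action of `(τ, μ)` iff `z ∈ A(τ)`. -/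
lemma lastAction_iff_Aset {τ μ : V → V} (hτ : T.IsRedStrat τ) (hμ : T.IsEnv μ) {z : V}
    (hzZ : z ∈ T.Zset μ) : T.IsLastAction τ μ z ↔ z ∈ T.Aset τ := by
  rw [Zset, Finset.mem_filter] at hzZ
  obtain ⟨hzA, hzE, hzL⟩ := hzZ
  constructor
  · intro h
    rw [Aset, Finset.mem_filter]
    exact ⟨hzA, T.playPath_subset_reachS hμ h.2.1⟩
  · intro h
    rw [Aset, Finset.mem_filter] at h
    have hzP : z ∈ T.playPath τ μ :=
      T.mem_playPath_of_reach hτ hμ (T.depth z) z le_rfl h.2 hzE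
    exact ⟨hzA, hzP, T.playPath_desc hτ hμ hzA hzP hzL⟩

end Aux3
section Aux4
variable {V : Type*} [Fintype V] [DecidableEq V] (T : EFTree V)

lemma trunc_spec (f : V → V) (hf : ∀ v ∈ T.N, f v ∈ T.children v) :
    T.reachS (fun v => if v ∈ T.N ∧ v ∈ T.reachS f then f v else v) = T.reachS f ∧
    T.IsRedStrat (fun v => if v ∈ T.N ∧ v ∈ T.reachS f then f v else v) := by
  set σ : V → V := fun v => if v ∈ T.N ∧ v ∈ T.reachS f then f v else v with hσdef
  have heq : T.reachS σ = T.reachS f := by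
    apply Set.Subset.antisymm
    · -- reachS σ ⊆ reachS f
      have hsub : T.reachS σ ⊆ T.reachS σ ∩ T.reachS f := by
        apply T.reachFrom_subset
        · exact ⟨T.reachFrom_self _ _, T.reachFrom_self _ _⟩
        · intro v hv hvs
          refine ⟨T.reachFrom_strat hv hvs.1, ?_⟩
          have : σ v = f v := by
            simp only [hσdef]; exact if_pos ⟨hv, hvs.2⟩
          rw [this]
          exact T.reachFrom_strat hv hvs.2
        · intro a ha has u hu
          exact ⟨T.reachFrom_children ha has.1 hu, T.reachFrom_children ha has.2 hu⟩
      exact fun x hx => (hsub hx).2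
    · -- reachS f ⊆ reachS σ
      have hsub : T.reachS f ⊆ T.reachS f ∩ T.reachS σ := by
        apply T.reachFrom_subset
        · exact ⟨T.reachFrom_self _ _, T.reachFrom_self _ _⟩
        · intro v hv hvs
          refine ⟨T.reachFrom_strat hv hvs.1, ?_⟩
          have : σ v = f v := by
            simp only [hσdef]; exact if_pos ⟨hv, hvs.1⟩
          rw [← this]
          exact T.reachFrom_strat hv hvs.2
        · intro a ha has u hu
          exact ⟨T.reachFrom_children ha has.1 hu, T.reachFrom_children ha has.2 hu⟩
      exact fun x hx => (hsub hx).2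
  have heq' : T.reachFrom T.root σ = T.reachS f := heq
  refine ⟨heq, ?_, ?_⟩
  · intro v hv hvr
    rw [heq'] at hvr
    have : σ v = f v := by
      simp only [hσdef]; exact if_pos ⟨hv, hvr⟩
    rw [this]
    exact hf v hv
  · intro v hvn
    rw [heq'] at hvn
    simp only [hσdef]
    rw [if_neg hvn]

/-- For every action `z` consistent with the environment there is a reduced
strategy reaching it. -/
lemma exists_redStrat_reaching {μ : V → V} (hμ : T.IsEnv μ) {z : V} (hz : z ∈ T.A)
    (hzE : z ∈ T.reachE μ) : ∃ σ : V → V, T.IsRedStrat σ ∧ z ∈ T.Aset σ := by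
  classical
  set f : V → V := fun v =>
    if hv : v ∈ T.N then
      (if T.Desc z v ∧ T.depth v < T.depth z then T.parent^[T.depth z - T.depth v - 1] z
       else (T.children_nonempty hv).choose)
    else v with hfdef
  have hf : ∀ v ∈ T.N, f v ∈ T.children v := by
    intro v hv
    simp only [hfdef, dif_pos hv]
    by_cases hcond : T.Desc z v ∧ T.depth v < T.depth z
    · rw [if_pos hcond]
      obtain ⟨hle, hk⟩ := T.desc_normalize hcond.1
      have hd1 : T.depth z - T.depth v = (T.depth z - T.depth v - 1) + 1 := by omega
      rw [mem_children]
      constructor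
      · intro h0
        have := T.depth_iterate_of_le (v := z) (k := T.depth z - T.depth v - 1) (by omega)
        rw [h0, T.depth_root] at this
        omega
      · have hk' : T.parent^[(T.depth z - T.depth v - 1) + 1] z = v := by
          rw [← hd1]; exact hk
        rw [Function.iterate_succ_apply'] at hk'
        exact hk'
    · rw [if_neg hcond]
      exact (T.children_nonempty hv).choose_spec
  -- z is reachable under f
  have hreach : ∀ j : ℕ, j ≤ T.depth z → T.parent^[T.depth z - j] z ∈ T.reachS f := by
    intro j
    induction j with
    | zero =>
      intro _
      simp only [Nat.sub_zero]
      rw [T.parent_iterate_depth]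
      exact T.reachFrom_self _ _
    | succ n ih =>
      intro hn
      have hp : T.parent^[T.depth z - n] z ∈ T.reachS f := ih (by omega)
      have hstep : T.parent (T.parent^[T.depth z - (n+1)] z) = T.parent^[T.depth z - n] z := by
        rw [← Function.iterate_succ_apply' T.parent _ z]
        congr 1
        omega
      have hdu : T.depth (T.parent^[T.depth z - (n+1)] z) = n + 1 := by
        have := T.depth_iterate_of_le (v := z) (k := T.depth z - (n+1)) (by omega)
        omega
      have hune : T.parent^[T.depth z - (n+1)] z ≠ T.root := by
        intro h0
        rw [h0, T.depth_root] at hdu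
        omega
      have hdp : T.depth (T.parent^[T.depth z - n] z) = n := by
        have := T.depth_iterate_of_le (v := z) (k := T.depth z - n) (by omega)
        omega
      rcases T.internal_of_child (u := T.parent^[T.depth z - (n+1)] z) hune with hN | hA
      · rw [hstep] at hN
        have hfp : f (T.parent^[T.depth z - n] z) = T.parent^[T.depth z - (n+1)] z := by
          simp only [hfdef, dif_pos hN]
          rw [if_pos ⟨T.desc_parent_iterate z _, by omega⟩]
          congr 1
          omega
        have := T.reachFrom_strat hN hp
        rw [hfp] at this
        exact this
      · rw [hstep] at hA
        refine T.reachFrom_children hA hp ?_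
        rw [mem_children]
        exact ⟨hune, hstep⟩
  have hzr : z ∈ T.reachS f := by
    have := hreach (T.depth z) le_rfl
    simpa using this
  obtain ⟨heq, hred⟩ := T.trunc_spec f hf
  refine ⟨_, hred, ?_⟩
  rw [Aset, Finset.mem_filter]
  refine ⟨hz, ?_⟩
  rw [reachS] at heq ⊢
  rw [heq]
  exact hzr

end Aux4
section Aux5
variable {V : Type*} [Fintype V] [DecidableEq V] (T : EFTree V)

lemma depth_child {u v : V} (h : u ∈ T.children v) : T.depth u = T.depth v + 1 := by
  rw [mem_children] at h
  rw [T.depth_parent u h.1, h.2]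

lemma desc_trans_child {z u v : V} (h : T.Desc z u) (hu : u ∈ T.children v) :
    T.Desc z v := by
  obtain ⟨k, hk⟩ := h
  exact ⟨k + 1, by rw [Function.iterate_succ_apply', hk, ((T.mem_children).1 hu).2]⟩

lemma desc_leaf {z u : V} (hd : T.Desc z u) (hu : u ∈ T.leaves) : z = u := by
  by_contra hne
  obtain ⟨hle, hk⟩ := T.desc_normalize hd
  have hk0 : T.depth z - T.depth u ≠ 0 := by
    intro h0; rw [h0] at hk; simp at hk; exact hne hk
  obtain ⟨j, hj⟩ : ∃ j, T.depth z - T.depth u = j + 1 :=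
    ⟨_, (Nat.succ_pred_eq_of_pos (Nat.pos_of_ne_zero hk0)).symm⟩
  rw [hj] at hk
  have hune : T.parent^[j] z ≠ T.root := by
    intro h0
    have hdu := T.depth_iterate_of_le (v := z) (k := j) (by omega)
    rw [h0, T.depth_root] at hdu
    omega
  have hpar : T.parent (T.parent^[j] z) = u := by
    rw [← Function.iterate_succ_apply' T.parent j z]; exact hk
  have := T.internal_of_child hune
  rw [hpar] at this
  rw [mem_leaves_iff] at hu
  rcases this with h | h
  · exact hu.1 h
  · exact hu.2 h

/-- The child of `v` through which a strict descendant `z` passes. -/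
lemma desc_child {z v : V} (hd : T.Desc z v) (hne : z ≠ v) :
    ∃ u ∈ T.children v, T.Desc z u ∧
      T.parent^[T.depth z - T.depth v - 1] z = u := by
  obtain ⟨hle, hk⟩ := T.desc_normalize hd
  have hk0 : T.depth z - T.depth v ≠ 0 := by
    intro h0; rw [h0] at hk; simp at hk; exact hne hk
  refine ⟨T.parent^[T.depth z - T.depth v - 1] z, ?_, T.desc_parent_iterate z _, rfl⟩
  have hd1 : T.depth z - T.depth v = (T.depth z - T.depth v - 1) + 1 := by omega
  rw [mem_children]
  constructor
  · intro h0
    have := T.depth_iterate_of_le (v := z) (k := T.depth z - T.depth v - 1) (by omega)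
    rw [h0, T.depth_root] at this
    omega
  · have hk' : T.parent^[(T.depth z - T.depth v - 1) + 1] z = v := by rw [← hd1]; exact hk
    rw [Function.iterate_succ_apply'] at hk'
    exact hk'

lemma desc_child_unique {z v u₁ u₂ : V} (h₁ : u₁ ∈ T.children v) (h₂ : u₂ ∈ T.children v)
    (hd₁ : T.Desc z u₁) (hd₂ : T.Desc z u₂) : u₁ = u₂ := by
  have e₁ := T.depth_child h₁
  have e₂ := T.depth_child h₂
  have n₁ := T.desc_normalize hd₁
  have n₂ := T.desc_normalize hd₂
  rw [← n₁.2, ← n₂.2, e₁, e₂]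

/-- Partition of the descendants of an infoset (or any node) among its children. -/
lemma filter_desc_biUnion (S : Finset V) (hS : S ⊆ T.A) {v : V} (hv : v ∈ T.N) :
    S.filter (fun z => T.Desc z v) =
      (T.children v).biUnion (fun u => S.filter (fun z => T.Desc z u)) := by
  ext z
  simp only [Finset.mem_biUnion, Finset.mem_filter]
  constructor
  · rintro ⟨hzS, hd⟩
    have hne : z ≠ v := by
      intro h; subst h; exact T.notA_of_N hv (hS hzS)
    obtain ⟨u, hu, hdu, -⟩ := T.desc_child hd hne
    exact ⟨u, hu, hzS, hdu⟩
  · rintro ⟨u, hu, hzS, hdu⟩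
    exact ⟨hzS, T.desc_trans_child hdu hu⟩

lemma sum_filter_desc_children {M : Type*} [AddCommMonoid M] (g : V → M)
    (S : Finset V) (hS : S ⊆ T.A) {v : V} (hv : v ∈ T.N) :
    ∑ z ∈ S.filter (fun z => T.Desc z v), g z =
      ∑ u ∈ T.children v, ∑ z ∈ S.filter (fun z => T.Desc z u), g z := by
  rw [T.filter_desc_biUnion S hS hv]
  refine Finset.sum_biUnion ?_
  intro u₁ h₁ u₂ h₂ hne
  simp only [Finset.mem_coe] at h₁ h₂
  refine Finset.disjoint_left.2 ?_
  intro z hz₁ hz₂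
  rw [Finset.mem_filter] at hz₁ hz₂
  exact hne (T.desc_child_unique h₁ h₂ hz₁.2 hz₂.2)

/-- Partition of the descendants of an action. -/
lemma filter_desc_action (S : Finset V) (hS : S ⊆ T.A) {a : V} (ha : a ∈ T.A)
    (haS : a ∈ S) :
    S.filter (fun z => T.Desc z a) =
      insert a (((T.children a).filter (· ∈ T.N)).biUnion
        (fun u => S.filter (fun z => T.Desc z u))) := by
  ext z
  simp only [Finset.mem_biUnion, Finset.mem_filter, Finset.mem_insert]
  constructor
  · rintro ⟨hzS, hd⟩
    by_cases hne : z = a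
    · exact Or.inl hne
    · obtain ⟨u, hu, hdu, -⟩ := T.desc_child hd hne
      have huA : u ∉ T.A := T.child_of_A_not_A ha hu
      have huN : u ∈ T.N := by
        by_contra huN
        have : u ∈ T.leaves := (T.mem_leaves_iff).2 ⟨huN, huA⟩
        have := T.desc_leaf hdu this
        subst this
        exact huA (hS hzS)
      exact Or.inr ⟨u, ⟨hu, huN⟩, hzS, hdu⟩
  · rintro (rfl | ⟨u, ⟨hu, -⟩, hzS, hdu⟩)
    · exact ⟨haS, ⟨0, rfl⟩⟩
    · exact ⟨hzS, T.desc_trans_child hdu hu⟩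

lemma sum_filter_desc_action {M : Type*} [AddCommMonoid M] (g : V → M)
    (S : Finset V) (hS : S ⊆ T.A) {a : V} (ha : a ∈ T.A) (haS : a ∈ S) :
    ∑ z ∈ S.filter (fun z => T.Desc z a), g z =
      g a + ∑ u ∈ (T.children a).filter (· ∈ T.N),
        ∑ z ∈ S.filter (fun z => T.Desc z u), g z := by
  rw [T.filter_desc_action S hS ha haS]
  rw [Finset.sum_insert, Finset.sum_biUnion]
  · intro u₁ h₁ u₂ h₂ hne
    simp only [Finset.mem_coe, Finset.mem_filter] at h₁ h₂
    refine Finset.disjoint_left.2 ?_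
    intro z hz₁ hz₂
    rw [Finset.mem_filter] at hz₁ hz₂
    exact hne (T.desc_child_unique h₁.1 h₂.1 hz₁.2 hz₂.2)
  · -- a not in the biUnion
    intro hmem
    simp only [Finset.mem_biUnion, Finset.mem_filter] at hmem
    obtain ⟨u, ⟨hu, -⟩, -, hd⟩ := hmem
    have := (T.desc_normalize hd).1
    have := T.depth_child hu
    omega

end Aux5
section Aux6
variable {V : Type*} [Fintype V] [DecidableEq V] (T : EFTree V)

lemma card_desc_eq_m (m : V → ℕ)
    (hmA : ∀ a ∈ T.A, m a = 1 + ∑ v ∈ (T.children a).filter (· ∈ T.N), m v)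
    (hmN : ∀ v ∈ T.N, m v = ∑ a ∈ T.children v, m a) :
    ∀ n : ℕ, ∀ u : V, Fintype.card V - T.depth u ≤ n → (u ∈ T.A ∨ u ∈ T.N) →
      (T.A.filter (fun z => T.Desc z u)).card = m u := by
  intro n
  induction n with
  | zero => intro u hn _; have := T.depth_lt_card u; omega
  | succ n ih =>
    intro u hn hu
    have hdu := T.depth_lt_card u
    rcases hu with hA | hN
    · rw [Finset.card_eq_sum_ones,
        T.sum_filter_desc_action (fun _ => 1) T.A (Finset.Subset.refl _) hA hA,
        hmA u hA]
      congr 1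
      refine Finset.sum_congr rfl ?_
      intro v hv
      rw [Finset.mem_filter] at hv
      have hdv := T.depth_child hv.1
      rw [← Finset.card_eq_sum_ones]
      exact ih v (by omega) (Or.inr hv.2)
    · rw [Finset.card_eq_sum_ones,
        T.sum_filter_desc_children (fun _ => 1) T.A (Finset.Subset.refl _) hN,
        hmN u hN]
      refine Finset.sum_congr rfl ?_
      intro a ha
      have hda := T.depth_child ha
      rw [← Finset.card_eq_sum_ones]
      exact ih a (by omega) (Or.inl (T.child_of_N_mem_A hN ha))

lemma m_eq_card (m : V → ℕ)
    (hmA : ∀ a ∈ T.A, m a = 1 + ∑ v ∈ (T.children a).filter (· ∈ T.N), m v)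
    (hmN : ∀ v ∈ T.N, m v = ∑ a ∈ T.children v, m a) :
    m T.root = T.A.card := by
  have h := T.card_desc_eq_m m hmA hmN (Fintype.card V) T.root (by omega)
    (Or.inr T.root_N)
  rw [← h]
  congr 1
  rw [Finset.filter_true_of_mem]
  intro z _
  exact T.desc_root z

lemma m_pos_A (m : V → ℕ)
    (hmA : ∀ a ∈ T.A, m a = 1 + ∑ v ∈ (T.children a).filter (· ∈ T.N), m v)
    {a : V} (ha : a ∈ T.A) : 0 < m a := by
  rw [hmA a ha]; omega

lemma m_pos_N (m : V → ℕ)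
    (hmA : ∀ a ∈ T.A, m a = 1 + ∑ v ∈ (T.children a).filter (· ∈ T.N), m v)
    (hmN : ∀ v ∈ T.N, m v = ∑ a ∈ T.children v, m a)
    {v : V} (hv : v ∈ T.N) : 0 < m v := by
  rw [hmN v hv]
  obtain ⟨a, ha⟩ := T.children_nonempty hv
  have h1 : 0 < m a := T.m_pos_A m hmA (T.child_of_N_mem_A hv ha)
  calc 0 < m a := h1
    _ ≤ ∑ a ∈ T.children v, m a := Finset.single_le_sum (fun _ _ => Nat.zero_le _) ha

lemma Zset_subset_A (μ : V → V) : T.Zset μ ⊆ T.A := Finset.filter_subset _ _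

/-- The core computation: summing `β` over the reachable terminal actions in
the subtree of a reachable node. -/
lemma sum_beta_desc (m : V → ℕ)
    (hmA : ∀ a ∈ T.A, m a = 1 + ∑ v ∈ (T.children a).filter (· ∈ T.N), m v)
    (hmN : ∀ v ∈ T.N, m v = ∑ a ∈ T.children v, m a)
    (β : V → ℝ)
    (hβA : ∀ a ∈ T.A, β a = (m a : ℝ) * β (T.parent a))
    (hβN : ∀ v ∈ T.N, v ≠ T.root → β v = β (T.parent v) / (m v : ℝ))
    {μ : V → V} (hμ : T.IsEnv μ) :
    ∀ n : ℕ, ∀ u : V, Fintype.card V - T.depth u ≤ n → u ∈ T.reachE μ →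
      (u ∈ T.A → ∑ z ∈ (T.Zset μ).filter (fun z => T.Desc z u), β z = β u) ∧
      (u ∈ T.N → ∑ z ∈ (T.Zset μ).filter (fun z => T.Desc z u), β z = (m u : ℝ) * β u) := by
  intro n
  induction n with
  | zero => intro u hn _; have := T.depth_lt_card u; omega
  | succ n ih =>
    intro u hn huE
    have hdu := T.depth_lt_card u
    constructor
    · -- u is an action
      intro hA
      have hnotN : u ∉ T.N := fun h => T.notA_of_N h hA
      have hμu : μ u ∈ T.children u := hμ u hA
      have hμuA : μ u ∉ T.A := T.child_of_A_not_A hA hμu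
      by_cases hμuN : μ u ∈ T.N
      · -- μ u is an infoset: recurse
        have hvE : μ u ∈ T.reachE μ := T.reachE_env hA huE
        have hdμ := T.depth_child hμu
        have hIH := (ih (μ u) (by omega) hvE).2 hμuN
        have hset : (T.Zset μ).filter (fun z => T.Desc z u) =
            (T.Zset μ).filter (fun z => T.Desc z (μ u)) := by
          ext z
          simp only [Finset.mem_filter]
          constructor
          · rintro ⟨hzZ, hd⟩
            refine ⟨hzZ, ?_⟩
            have hzZ' := hzZ
            rw [Zset, Finset.mem_filter] at hzZ'
            have hzne : z ≠ u := by
              rintro rfl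
              exact ((T.mem_leaves_iff).1 hzZ'.2.2).1 hμuN
            obtain ⟨w, hw, hdw, hwit⟩ := T.desc_child hd hzne
            -- w ∈ reachE and μ u = w
            have hwE : w ∈ T.reachE μ := by
              rw [← hwit]
              exact T.reachE_ancestor_iterate hμ hzZ'.2.1 _
            have hwr : w ≠ T.root := ((T.mem_children).1 hw).1
            have := (T.reachE_ancestor hμ hwE hwr).2
            rw [((T.mem_children).1 hw).2] at this
            rw [this hA]
            exact hdw
          · rintro ⟨hzZ, hd⟩
            exact ⟨hzZ, T.desc_trans_child hd hμu⟩
        rw [hset, hIH]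
        have hvr : μ u ≠ T.root := ((T.mem_children).1 hμu).1
        have hβv := hβN (μ u) hμuN hvr
        rw [((T.mem_children).1 hμu).2] at hβv
        rw [hβv]
        have hmpos : (0:ℝ) < (m (μ u) : ℝ) := by
          exact_mod_cast T.m_pos_N m hmA hmN hμuN
        field_simp
      · -- μ u is a leaf: the only terminal descendant is u itself
        have hleaf : μ u ∈ T.leaves := (T.mem_leaves_iff).2 ⟨hμuN, hμuA⟩
        have hset : (T.Zset μ).filter (fun z => T.Desc z u) = {u} := by
          ext z
          simp only [Finset.mem_filter, Finset.mem_singleton]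
          constructor
          · rintro ⟨hzZ, hd⟩
            rw [Zset, Finset.mem_filter] at hzZ
            by_contra hzne
            obtain ⟨w, hw, hdw, hwit⟩ := T.desc_child hd hzne
            have hwE : w ∈ T.reachE μ := by
              rw [← hwit]
              exact T.reachE_ancestor_iterate hμ hzZ.2.1 _
            have hwr : w ≠ T.root := ((T.mem_children).1 hw).1
            have := (T.reachE_ancestor hμ hwE hwr).2
            rw [((T.mem_children).1 hw).2] at this
            have hwμ : μ u = w := this hA
            have : z = w := T.desc_leaf hdw (hwμ ▸ hleaf)
            subst this
            exact hμuA (hwμ ▸ hzZ.1)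
          · rintro rfl
            refine ⟨?_, ⟨0, rfl⟩⟩
            rw [Zset, Finset.mem_filter]
            exact ⟨hA, huE, hleaf⟩
        rw [hset, Finset.sum_singleton]
    · -- u is an infoset
      intro hN
      rw [T.sum_filter_desc_children β (T.Zset μ) (T.Zset_subset_A μ) hN]
      have hstep : ∀ a ∈ T.children u,
          ∑ z ∈ (T.Zset μ).filter (fun z => T.Desc z a), β z = (m a : ℝ) * β u := by
        intro a ha
        have haA : a ∈ T.A := T.child_of_N_mem_A hN ha
        have haE : a ∈ T.reachE μ := T.reachE_children hN huE ha
        have hda := T.depth_child ha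
        have := (ih a (by omega) haE).1 haA
        rw [this, hβA a haA, ((T.mem_children).1 ha).2]
      rw [Finset.sum_congr rfl hstep, ← Finset.sum_mul]
      congr 1
      rw [hmN u hN]
      push_cast
      rfl

lemma sum_beta_Zset (m : V → ℕ)
    (hmA : ∀ a ∈ T.A, m a = 1 + ∑ v ∈ (T.children a).filter (· ∈ T.N), m v)
    (hmN : ∀ v ∈ T.N, m v = ∑ a ∈ T.children v, m a)
    (β : V → ℝ) (hβr : β T.root = 1)
    (hβA : ∀ a ∈ T.A, β a = (m a : ℝ) * β (T.parent a))
    (hβN : ∀ v ∈ T.N, v ≠ T.root → β v = β (T.parent v) / (m v : ℝ))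
    {μ : V → V} (hμ : T.IsEnv μ) :
    ∑ z ∈ T.Zset μ, β z = (T.A.card : ℝ) := by
  have h := (T.sum_beta_desc m hmA hmN β hβA hβN hμ (Fintype.card V) T.root (by omega)
    (T.reachE_root μ)).2 T.root_N
  rw [Finset.filter_true_of_mem (fun z _ => T.desc_root z)] at h
  rw [h, hβr, mul_one, T.m_eq_card m hmA hmN]

end Aux6
end EFTree

theorem stmt11 {V : Type*} [Fintype V] [DecidableEq V] (T : EFTree V)
    (m : V → ℕ)
    (hmA : ∀ a ∈ T.A, m a = 1 + ∑ v ∈ (T.children a).filter (· ∈ T.N), m v)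
    (hmN : ∀ v ∈ T.N, m v = ∑ a ∈ T.children v, m a)
    (β : V → ℝ) (hβr : β T.root = 1)
    (hβA : ∀ a ∈ T.A, β a = (m a : ℝ) * β (T.parent a))
    (hβN : ∀ v ∈ T.N, v ≠ T.root → β v = β (T.parent v) / (m v : ℝ))
    (π : V → ℝ) (hπ : T.IsPolicy π) (hπpos : ∀ a ∈ T.A, 0 < π a)
    (μ : V → V) (hμ : T.IsEnv μ)
    (ztil : (V → V) → V) (hz : ∀ σ : V → V, T.IsRedStrat σ → T.IsLastAction σ μ (ztil σ)) :
    ∑ σ ∈ Finset.univ.filter (fun σ : V → V => T.IsRedStrat σ),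
      β (ztil σ) * (∏ a ∈ T.Aset σ, π a) /
        (∑ τ ∈ Finset.univ.filter (fun τ : V → V => T.IsRedStrat τ ∧ ztil σ ∈ T.Aset τ),
          ∏ a ∈ T.Aset τ, π a) = (T.A.card : ℝ) := by
  classical
  set F := Finset.univ.filter (fun σ : V → V => T.IsRedStrat σ) with hF
  have hmem : ∀ σ : V → V, σ ∈ F ↔ T.IsRedStrat σ := by
    intro σ; rw [hF, Finset.mem_filter]; simp
  have hmaps : ∀ σ ∈ F, ztil σ ∈ T.Zset μ := fun σ hσ =>
    T.lastAction_mem_Zset ((hmem σ).1 hσ) hμ (hz σ ((hmem σ).1 hσ))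
  have hwpos : ∀ τ : V → V, 0 < ∏ a ∈ T.Aset τ, π a := by
    intro τ
    refine Finset.prod_pos ?_
    intro a ha
    exact hπpos a (Finset.mem_filter.1 ha).1
  have hfiber : ∀ z ∈ T.Zset μ, ∀ τ ∈ F, (ztil τ = z ↔ z ∈ T.Aset τ) := by
    intro z hzZ τ hτ
    have hτR := (hmem τ).1 hτ
    constructor
    · rintro rfl
      exact (T.lastAction_iff_Aset hτR hμ (hmaps τ hτ)).1 (hz τ hτR)
    · intro hA
      exact T.lastAction_unique (hz τ hτR) ((T.lastAction_iff_Aset hτR hμ hzZ).2 hA)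
  have hDpos : ∀ z ∈ T.Zset μ,
      0 < ∑ τ ∈ F.filter (fun τ => ztil τ = z), ∏ a ∈ T.Aset τ, π a := by
    intro z hzZ
    have hzZ' := Finset.mem_filter.1 hzZ
    obtain ⟨σ0, hσ0R, hσ0A⟩ := T.exists_redStrat_reaching hμ hzZ'.1 hzZ'.2.1
    have hσ0F : σ0 ∈ F := (hmem σ0).2 hσ0R
    refine Finset.sum_pos (fun τ _ => hwpos τ) ⟨σ0, ?_⟩
    rw [Finset.mem_filter]
    exact ⟨hσ0F, (hfiber z hzZ σ0 hσ0F).2 hσ0A⟩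
  have hstep1 : ∑ σ ∈ F, β (ztil σ) * (∏ a ∈ T.Aset σ, π a) /
      (∑ τ ∈ Finset.univ.filter (fun τ : V → V => T.IsRedStrat τ ∧ ztil σ ∈ T.Aset τ),
        ∏ a ∈ T.Aset τ, π a)
      = ∑ σ ∈ F, β (ztil σ) * (∏ a ∈ T.Aset σ, π a) /
      (∑ τ ∈ F.filter (fun τ => ztil τ = ztil σ), ∏ a ∈ T.Aset τ, π a) := by
    refine Finset.sum_congr rfl ?_
    intro σ hσ
    congr 2
    ext τ
    simp only [Finset.mem_filter, Finset.mem_univ, true_and, hF]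
    constructor
    · rintro ⟨hτR, hτA⟩
      exact ⟨hτR, (hfiber (ztil σ) (hmaps σ hσ) τ ((hmem τ).2 hτR)).2 hτA⟩
    · rintro ⟨hτR, hτe⟩
      exact ⟨hτR, (hfiber (ztil σ) (hmaps σ hσ) τ ((hmem τ).2 hτR)).1 hτe⟩
  rw [hstep1]
  rw [← Finset.sum_fiberwise_of_maps_to hmaps
    (fun σ => β (ztil σ) * (∏ a ∈ T.Aset σ, π a) /
      (∑ τ ∈ F.filter (fun τ => ztil τ = ztil σ), ∏ a ∈ T.Aset τ, π a))]
  rw [← T.sum_beta_Zset m hmA hmN β hβr hβA hβN hμ]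
  refine Finset.sum_congr rfl ?_
  intro z hzZ
  have hcong : ∀ σ ∈ F.filter (fun σ => ztil σ = z),
      β (ztil σ) * (∏ a ∈ T.Aset σ, π a) /
        (∑ τ ∈ F.filter (fun τ => ztil τ = ztil σ), ∏ a ∈ T.Aset τ, π a)
      = β z * ((∏ a ∈ T.Aset σ, π a) /
        (∑ τ ∈ F.filter (fun τ => ztil τ = z), ∏ a ∈ T.Aset τ, π a)) := by
    intro σ hσ
    have he : ztil σ = z := (Finset.mem_filter.1 hσ).2
    rw [he, mul_div_assoc]
  rw [Finset.sum_congr rfl hcong, ← Finset.mul_sum, ← Finset.sum_div,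
    div_self (ne_of_gt (hDpos z hzZ)), mul_one]
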